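/- Let P be an n×l binary matrix with rows P₁,…,Pₙ, θ a real angle, and M an l×l binary matrix with M² = M. Let K be the kernel of M, K* the kernel of Mᵀ, R* the column space of Mᵀ, and d the F₂-dimension of R*. Then for every x ∈ F₂ˡ with M·x = x: Σ_{k∈K} ℙ[X = x+k] = 2^{−(l−d)} · Σ_{k∈K*} | 2^{−d} · Σ_{t∈R*} (−1)^{x·t} · exp( iθ · Σ_{j=1}^n (−1)^{P_j·(t+k)} ) |². -/

import Mathlib

open Matrix BigOperators Finset

noncomputable section

/-- The binary code generated by the columns of `P`: all vectors `P·s`. -/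
def code {m : Type*} [Fintype m] {l : ℕ} (P : Matrix m (Fin l) (ZMod 2)) :
    Finset (m → ZMod 2) :=
  Finset.image P.mulVec Finset.univ

/-- Rank function of the binary matroid of `P`: the F₂-rank of the submatrix of
rows indexed by `X`. -/
def rho {m : Type*} [Fintype m] {l : ℕ} (P : Matrix m (Fin l) (ZMod 2)) (X : Finset m) : ℕ :=
  (P.submatrix (fun i : {i // i ∈ X} => (i : m)) id).rank

/-- Tutte polynomial of the binary matroid of `P`. -/
def tutte {m : Type*} [Fintype m] {l : ℕ} (P : Matrix m (Fin l) (ZMod 2)) (x y : ℂ) : ℂ :=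
  ∑ X ∈ (Finset.univ : Finset m).powerset,
    (x - 1) ^ (rho P Finset.univ - rho P X) * (y - 1) ^ (X.card - rho P X)

/-- Normalised weight enumerator. -/
def alpha {m : Type*} [Fintype m] {l : ℕ} (P : Matrix m (Fin l) (ZMod 2)) (θ : ℝ) : ℂ :=
  (2 : ℂ) ^ (-(P.rank : ℤ)) *
    ∑ c ∈ code P, Complex.exp (Complex.I * θ * ((Fintype.card m : ℂ) - 2 * (hammingNorm c : ℂ)))

/-- The IQP probability distribution of an X-program `(P, θ)`. -/
def iqpProb {n l : ℕ} (P : Matrix (Fin n) (Fin l) (ZMod 2)) (θ : ℝ) (x : Fin l → ZMod 2) : ℝ :=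
  ‖(2 : ℂ) ^ (-(l : ℤ)) *
    ∑ a : Fin l → ZMod 2, (-1 : ℂ) ^ (x ⬝ᵥ a).val *
      Complex.exp (Complex.I * θ * ∑ j, (-1 : ℂ) ^ ((P j) ⬝ᵥ a).val)‖ ^ 2

/-- Affinification: the submatrix of rows `P_j` with `P_j ⬝ s = 1`. -/
def affin {n l : ℕ} (P : Matrix (Fin n) (Fin l) (ZMod 2)) (s : Fin l → ZMod 2) :
    Matrix {j : Fin n // (P j) ⬝ᵥ s = 1} (Fin l) (ZMod 2) :=
  Matrix.of fun j k => P j.1 k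

/-! Expanding the squared moduli, the sum over the coset `x + ker M` produces the character sum
`∑_{k ∈ ker M} (-1)^{k·(a+b)}`, which is `#ker M = 2^{l-d}` when `a + b` lies in `R* = (ker M)^⊥`
(the fixed space of the idempotent `Mᵀ`) and `0` otherwise. Since `F₂ˡ = R* ⊕ ker Mᵀ`, the pairs
`(a, b)` with `a + b ∈ R*` are exactly the pairs `(t + k, s + k)` with `k ∈ ker Mᵀ` and `t, s ∈ R*`;
regrouping by `k` turns the double sum into the mixture of squared moduli. -/

theorem ZMod.neg_one_pow_val_add (u v : ZMod 2) :
    (-1 : ℂ) ^ (u + v).val = (-1) ^ u.val * (-1) ^ v.val := by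
  rw [ZMod.val_add, ← pow_add, ← Nat.mod_add_div (u.val + v.val) 2, pow_add, pow_mul]
  norm_num

theorem ZMod.neg_one_pow_val_sub (u v : ZMod 2) :
    (-1 : ℂ) ^ (u - v).val = (-1) ^ u.val * (-1) ^ v.val := by
  rw [sub_eq_add_neg, ZMod.neg_eq_self_mod_two, ZMod.neg_one_pow_val_add]

theorem Complex.ofReal_sq_norm_sum {α : Type*} (s : Finset α) (f : α → ℂ) :
    ((‖∑ i ∈ s, f i‖ ^ 2 : ℝ) : ℂ) = ∑ i ∈ s, ∑ j ∈ s, f i * starRingEnd ℂ (f j) := by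
  rw [Complex.ofReal_pow, ← Complex.mul_conj', map_sum, Finset.sum_mul_sum]

namespace Matrix

section IdempotentElem

variable {ι R : Type*} [Fintype ι] [CommRing R] {N : Matrix ι ι R}

theorem _root_.IsIdempotentElem.transpose (hN : IsIdempotentElem N) : IsIdempotentElem Nᵀ := by
  rw [IsIdempotentElem, ← transpose_mul, hN.eq]

theorem mulVec_sub_mulVec_self_eq_zero (hN : IsIdempotentElem N) (v : ι → R) :
    N *ᵥ (v - N *ᵥ v) = 0 := by
  rw [mulVec_sub, mulVec_mulVec, hN.eq, sub_self]

variable [DecidableEq ι]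

theorem forall_ker_dotProduct_eq_zero_iff (hN : IsIdempotentElem N) (v : ι → R) :
    (∀ k, N *ᵥ k = 0 → k ⬝ᵥ v = 0) ↔ Nᵀ *ᵥ v = v := by
  refine ⟨fun h => funext fun i => ?_, fun h k hk => ?_⟩
  · have hi := h _ (mulVec_sub_mulVec_self_eq_zero hN (Pi.single i 1))
    rwa [sub_dotProduct, single_dotProduct, one_mul, sub_eq_zero, mulVec_single_one,
      eq_comm] at hi
  · rw [← h, dotProduct_mulVec, vecMul_transpose, hk, zero_dotProduct]

variable [Fintype R] [DecidableEq R]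

theorem sum_filter_sub_mulVec_self_eq {M : Type*} [AddCommMonoid M] (hN : IsIdempotentElem N)
    {k : ι → R} (hk : N *ᵥ k = 0) (g : (ι → R) → M) :
    ∑ a ∈ {a | a - N *ᵥ a = k}, g a = ∑ t ∈ {t | N *ᵥ t = t}, g (t + k) := by
  refine Finset.sum_nbij' (N *ᵥ ·) (· + k) (fun a _ => ?_) (fun t ht => ?_) (fun a ha => ?_)
    (fun t ht => ?_) (fun a ha => ?_)
  all_goals simp only [mem_filter, mem_univ, true_and] at *
  · rw [mulVec_mulVec, hN.eq]
  · rw [mulVec_add, ht, hk, add_zero, add_sub_cancel_left]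
  · rw [← ha, add_sub_cancel]
  · rw [mulVec_add, ht, hk, add_zero]
  · rw [← ha, add_sub_cancel]

theorem sum_sum_ite_mulVec_sub_eq {M : Type*} [AddCommMonoid M] (hN : IsIdempotentElem N)
    (f : (ι → R) → (ι → R) → M) :
    ∑ a, ∑ b, (if N *ᵥ (a - b) = a - b then f a b else 0) =
      ∑ k ∈ {k | N *ᵥ k = 0}, ∑ t ∈ {t | N *ᵥ t = t}, ∑ s ∈ {s | N *ᵥ s = s},
        f (t + k) (s + k) := by
  have hfibre : ∀ a b, N *ᵥ (a - b) = a - b ↔ b - N *ᵥ b = a - N *ᵥ a := fun a b => by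
    rw [mulVec_sub]
    constructor <;> intro h <;> linear_combination h
  have hker : ∀ a ∈ (univ : Finset (ι → R)), a - N *ᵥ a ∈ ({k | N *ᵥ k = 0} : Finset _) :=
    fun a _ => by simpa using mulVec_sub_mulVec_self_eq_zero hN a
  simp_rw [hfibre, ← Finset.sum_filter]
  rw [← Finset.sum_fiberwise_of_maps_to hker]
  refine Finset.sum_congr rfl fun k hk => ?_
  have hk : N *ᵥ k = 0 := by simpa using hk
  calc _ = ∑ a ∈ {a | a - N *ᵥ a = k}, ∑ s ∈ {s | N *ᵥ s = s}, f a (s + k) :=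
        Finset.sum_congr rfl fun a ha => by
          rw [(Finset.mem_filter.mp ha).2, sum_filter_sub_mulVec_self_eq hN hk]
    _ = _ := sum_filter_sub_mulVec_self_eq hN hk _

end IdempotentElem

section ZModTwo

variable {ι : Type*} [Fintype ι] [DecidableEq ι] {M : Matrix ι ι (ZMod 2)}

theorem card_ker_mul_pow_rank {m K : Type*} [Fintype m] [Field K] [Fintype K] [DecidableEq K]
    (A : Matrix m ι K) :
    #{k | A *ᵥ k = 0} * Fintype.card K ^ A.rank = Fintype.card K ^ Fintype.card ι := by
  have hker : #{k | A *ᵥ k = 0} = Nat.card (LinearMap.ker A.mulVecLin) := by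
    rw [← Fintype.card_subtype, ← Nat.card_eq_fintype_card]
    rfl
  rw [hker, Module.natCard_eq_pow_finrank (K := K), Nat.card_eq_fintype_card, ← pow_add, rank,
    add_comm, LinearMap.finrank_range_add_finrank_ker, Module.finrank_fintype_fun_eq_card]

theorem sum_ker_neg_one_pow_dotProduct (hM : IsIdempotentElem M) (v : ι → ZMod 2) :
    ∑ k ∈ {k | M *ᵥ k = 0}, (-1 : ℂ) ^ (k ⬝ᵥ v).val =
      if Mᵀ *ᵥ v = v then (#{k | M *ᵥ k = 0} : ℂ) else 0 := by
  split_ifs with hv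
  · rw [Finset.sum_congr rfl fun k hk => ?_, sum_const, nsmul_one]
    rw [(forall_ker_dotProduct_eq_zero_iff hM v).2 hv k (mem_filter.mp hk).2, ZMod.val_zero,
      pow_zero]
  · obtain ⟨k₀, hk₀, hk₀v⟩ : ∃ k₀, M *ᵥ k₀ = 0 ∧ k₀ ⬝ᵥ v = 1 := by
      have hne_one : ∀ a : ZMod 2, a ≠ 0 → a = 1 := by decide
      simp only [← forall_ker_dotProduct_eq_zero_iff hM v, not_forall] at hv
      obtain ⟨k₀, hk₀, hk₀v⟩ := hv
      exact ⟨k₀, hk₀, hne_one _ hk₀v⟩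
    -- translation by `k₀` preserves the kernel and flips every sign
    have hflip : ∑ k ∈ {k | M *ᵥ k = 0}, (-1 : ℂ) ^ (k ⬝ᵥ v).val =
        ∑ k ∈ {k | M *ᵥ k = 0}, -(-1 : ℂ) ^ (k ⬝ᵥ v).val := by
      refine Finset.sum_equiv (Equiv.addRight k₀) (fun k => ?_) (fun k _ => ?_)
      · simp [mulVec_add, hk₀]
      · rw [Equiv.coe_addRight, add_dotProduct, hk₀v, ZMod.neg_one_pow_val_add, ZMod.val_one,
          pow_one, mul_neg_one, neg_neg]
    rw [sum_neg_distrib] at hflip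
    exact CharZero.eq_neg_self_iff.mp hflip

theorem sum_ker_sq_norm_sum_neg_one_pow (hM : IsIdempotentElem M) (y : ι → ZMod 2)
    (F : (ι → ZMod 2) → ℂ) :
    ∑ k ∈ {k | M *ᵥ k = 0}, ‖∑ a, (-1 : ℂ) ^ ((y + k) ⬝ᵥ a).val * F a‖ ^ 2 =
      #{k | M *ᵥ k = 0} * ∑ k ∈ {k | Mᵀ *ᵥ k = 0},
        ‖∑ t ∈ {t | Mᵀ *ᵥ t = t}, (-1 : ℂ) ^ (y ⬝ᵥ t).val * F (t + k)‖ ^ 2 := by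
  set G : (ι → ZMod 2) → ℂ := fun a => (-1 : ℂ) ^ (y ⬝ᵥ a).val * F a
  have hconj (u : ZMod 2) : starRingEnd ℂ ((-1) ^ u.val) = (-1) ^ u.val := by simp
  have hexpand (k : ι → ZMod 2) :
      ∑ a, (-1 : ℂ) ^ ((y + k) ⬝ᵥ a).val * F a = ∑ a, (-1) ^ (k ⬝ᵥ a).val * G a := by
    refine sum_congr rfl fun a _ => ?_
    rw [add_dotProduct, ZMod.neg_one_pow_val_add]
    ring
  have hshift (k : ι → ZMod 2) :
      ‖∑ t ∈ {t | Mᵀ *ᵥ t = t}, (-1 : ℂ) ^ (y ⬝ᵥ t).val * F (t + k)‖ =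
        ‖∑ t ∈ {t | Mᵀ *ᵥ t = t}, G (t + k)‖ := by
    have hG (t : ι → ZMod 2) :
        G (t + k) = (-1) ^ (y ⬝ᵥ k).val * ((-1) ^ (y ⬝ᵥ t).val * F (t + k)) := by
      simp only [G, dotProduct_add, ZMod.neg_one_pow_val_add]
      ring
    simp_rw [hG, ← mul_sum, norm_mul, norm_pow, norm_neg, norm_one, one_pow, one_mul]
  simp_rw [hexpand, hshift]
  apply Complex.ofReal_injective
  simp only [Complex.ofReal_sum, Complex.ofReal_mul, Complex.ofReal_natCast,
    Complex.ofReal_sq_norm_sum]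
  calc ∑ k ∈ {k | M *ᵥ k = 0}, ∑ a, ∑ b,
        (-1) ^ (k ⬝ᵥ a).val * G a * starRingEnd ℂ ((-1) ^ (k ⬝ᵥ b).val * G b)
      = ∑ a, ∑ b, G a * starRingEnd ℂ (G b) *
          ∑ k ∈ {k | M *ᵥ k = 0}, (-1 : ℂ) ^ (k ⬝ᵥ (a - b)).val := by
        rw [sum_comm]
        refine sum_congr rfl fun a _ => ?_
        rw [sum_comm]
        refine sum_congr rfl fun b _ => ?_
        rw [mul_sum]
        refine sum_congr rfl fun k _ => ?_
        rw [map_mul, hconj, dotProduct_sub, ZMod.neg_one_pow_val_sub]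
        ring
    _ = #{k | M *ᵥ k = 0} * ∑ a, ∑ b,
          if Mᵀ *ᵥ (a - b) = a - b then G a * starRingEnd ℂ (G b) else 0 := by
        simp_rw [sum_ker_neg_one_pow_dotProduct hM, mul_ite, mul_zero, mul_sum, mul_comm, ite_mul,
          zero_mul]
    _ = _ := by rw [sum_sum_ite_mulVec_sub_eq hM.transpose]

end ZModTwo

end Matrix

theorem code_eq_filter_mulVec_eq {l : ℕ} {N : Matrix (Fin l) (Fin l) (ZMod 2)}
    (hN : IsIdempotentElem N) : code N = ({v | N *ᵥ v = v} : Finset _) := by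
  ext v
  rw [code, mem_image, mem_filter]
  simp only [mem_univ, true_and]
  refine ⟨?_, fun hv => ⟨v, hv⟩⟩
  rintro ⟨w, rfl⟩
  rw [mulVec_mulVec, hN.eq]

theorem marginal_as_mixture_general {n l : ℕ} (P : Matrix (Fin n) (Fin l) (ZMod 2)) (θ : ℝ)
    (M : Matrix (Fin l) (Fin l) (ZMod 2)) (hM : M * M = M)
    (x : Fin l → ZMod 2) :
    ∑ k ∈ Finset.univ.filter (fun k : Fin l → ZMod 2 => M.mulVec k = 0),
        iqpProb P θ (x + k) =
      (2 : ℝ) ^ (-((l : ℤ) - (Mᵀ.rank : ℤ))) *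
        ∑ k ∈ Finset.univ.filter (fun k : Fin l → ZMod 2 => Mᵀ.mulVec k = 0),
          ‖(2 : ℂ) ^ (-(Mᵀ.rank : ℤ)) *
            ∑ t ∈ code Mᵀ, (-1 : ℂ) ^ (x ⬝ᵥ t).val *
              Complex.exp (Complex.I * θ *
                ∑ j, (-1 : ℂ) ^ ((P j) ⬝ᵥ (t + k)).val)‖ ^ 2 := by
  have hcard : (#{k | M *ᵥ k = 0} : ℝ) = 2 ^ ((l : ℤ) - Mᵀ.rank) := by
    have h := card_ker_mul_pow_rank M
    rw [ZMod.card, Fintype.card_fin, ← rank_transpose] at h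
    rw [zpow_sub₀ two_ne_zero, eq_div_iff (by positivity), zpow_natCast, zpow_natCast]
    exact_mod_cast h
  have hscale : ((2 : ℝ) ^ (-(l : ℤ))) ^ 2 * 2 ^ ((l : ℤ) - Mᵀ.rank) =
      2 ^ (-((l : ℤ) - Mᵀ.rank)) * ((2 : ℝ) ^ (-(Mᵀ.rank : ℤ))) ^ 2 := by
    simp only [← zpow_natCast, ← _root_.zpow_mul, ← zpow_add₀ (two_ne_zero' ℝ)]
    ring_nf
  simp only [iqpProb, norm_mul, mul_pow, ← mul_sum]
  rw [sum_ker_sq_norm_sum_neg_one_pow hM x, code_eq_filter_mulVec_eq (IsIdempotentElem.transpose hM),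
    hcard, norm_zpow, norm_zpow, Complex.norm_two, ← mul_assoc, ← mul_assoc, hscale]

/-- with `K = ker M`, `K* = ker Mᵀ`, `R* = col space of Mᵀ`, `d = dim R*`,
for `x` in the range of `M`:
`Σ_{k∈K} ℙ[X=x+k] = 2^{−(l−d)} · Σ_{k∈K*} |2^{−d} Σ_{t∈R*} (−1)^{x·t} exp(iθ Σ_j (−1)^{P_j·(t+k)})|²`. -/
theorem marginal_as_mixture {n l : ℕ} (P : Matrix (Fin n) (Fin l) (ZMod 2)) (θ : ℝ)
    (M : Matrix (Fin l) (Fin l) (ZMod 2)) (hM : M * M = M)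
    (x : Fin l → ZMod 2) (hx : M.mulVec x = x) :
    ∑ k ∈ Finset.univ.filter (fun k : Fin l → ZMod 2 => M.mulVec k = 0),
        iqpProb P θ (x + k) =
      (2 : ℝ) ^ (-((l : ℤ) - (Mᵀ.rank : ℤ))) *
        ∑ k ∈ Finset.univ.filter (fun k : Fin l → ZMod 2 => Mᵀ.mulVec k = 0),
          ‖(2 : ℂ) ^ (-(Mᵀ.rank : ℤ)) *
            ∑ t ∈ code Mᵀ, (-1 : ℂ) ^ (x ⬝ᵥ t).val *
              Complex.exp (Complex.I * θ *
                ∑ j, (-1 : ℂ) ^ ((P j) ⬝ᵥ (t + k)).val)‖ ^ 2 :=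
  marginal_as_mixture_general P θ M hM x

end
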